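/- Let (X_n)_{n∈ℤ} be a stationary integer-valued sequence with E[|X_0|] < ∞, and for i ∈ ℤ let C(i) = {j ∈ ℤ : R_X^a(j) = R_X^b(i) for some a, b ≥ 0} be the record component of i. Then P[C(0) is finite] = P[C(n) is finite for all n ≥ 1] = P[C(n) is finite for all n ≤ −1]. -/

import Mathlib

attribute [local instance] Classical.propDecidable

/-- The record map of an integer sequence: `n` is sent to the least integer `j > n`
with `∑_{l=n}^{j-1} x l ≥ 0` if such `j` exists, and to `n` otherwise. -/
noncomputable def recordMap (x : ℤ → ℤ) (n : ℤ) : ℤ :=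
  if ∃ j : ℤ, n < j ∧ 0 ≤ ∑ l ∈ Finset.Ico n j, x l then
    sInf {j : ℤ | n < j ∧ 0 ≤ ∑ l ∈ Finset.Ico n j, x l}
  else n

open MeasureTheory ProbabilityTheory

/-!
A point `p` is fixed by the record map exactly when every partial sum `y(p, j)`, `j > p`, is
negative, and an orbit started at or below a fixed point never passes it. Hence with no fixed
point at all every forward orbit is strictly increasing and every component is infinite, while a
fixed point `q' < n` and a fixed point `q ≥ n` confine the component of `n` to `[q', q]`.

By stationarity the events "there is a fixed point `≥ k`" all have the same probability, and
they decrease to the event of infinitely many fixed points to the right while their union is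
the event of some fixed point. So almost surely, if there is one fixed point, there are
infinitely many on both sides; the three events of the theorem are squeezed between these two
almost equal events.
-/

open Set Filter

section RecordMap

variable {x : ℤ → ℤ} {n m p q q' : ℤ}

/-- Equivalently, `recordMap x p = p`. -/
def IsRecordFixedPt (x : ℤ → ℤ) (p : ℤ) : Prop :=
  ∀ j, p < j → ∑ l ∈ Finset.Ico p j, x l < 0

def recordComponent (x : ℤ → ℤ) (i : ℤ) : Set ℤ :=
  {j | ∃ a b : ℕ, (recordMap x)^[a] j = (recordMap x)^[b] i}

lemma bddBelow_records (x : ℤ → ℤ) (n : ℤ) :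
    BddBelow {j : ℤ | n < j ∧ 0 ≤ ∑ l ∈ Finset.Ico n j, x l} :=
  ⟨n, fun _ hj => hj.1.le⟩

lemma recordMap_spec (h : ∃ j, n < j ∧ 0 ≤ ∑ l ∈ Finset.Ico n j, x l) :
    n < recordMap x n ∧ 0 ≤ ∑ l ∈ Finset.Ico n (recordMap x n), x l := by
  rw [recordMap, if_pos h]
  exact Int.csInf_mem h (bddBelow_records x n)

lemma recordMap_le_of_sum_nonneg (hm : n < m) (hsum : 0 ≤ ∑ l ∈ Finset.Ico n m, x l) :
    recordMap x n ≤ m := by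
  rw [recordMap, if_pos ⟨m, hm, hsum⟩]
  exact csInf_le (bddBelow_records x n) ⟨hm, hsum⟩

lemma le_recordMap (x : ℤ → ℤ) (n : ℤ) : n ≤ recordMap x n := by
  by_cases h : ∃ j, n < j ∧ 0 ≤ ∑ l ∈ Finset.Ico n j, x l
  · exact (recordMap_spec h).1.le
  · rw [recordMap, if_neg h]

lemma lt_recordMap (h : ¬ IsRecordFixedPt x n) : n < recordMap x n := by
  simp only [IsRecordFixedPt, not_forall, not_lt] at h
  obtain ⟨j, hj, hsum⟩ := h
  exact (recordMap_spec ⟨j, hj, hsum⟩).1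

/-- The sum from `m` up to the first record would otherwise split at `q` into a nonpositive part
(no earlier record) and a negative part (`q` is fixed). -/
lemma recordMap_le_of_isRecordFixedPt (hq : IsRecordFixedPt x q) (hm : m ≤ q) :
    recordMap x m ≤ q := by
  by_cases h : ∃ j, m < j ∧ 0 ≤ ∑ l ∈ Finset.Ico m j, x l
  · by_contra! hlt
    have hbefore : ∑ l ∈ Finset.Ico m q, x l ≤ 0 := by
      rcases hm.eq_or_lt with rfl | hmq
      · simp
      · by_contra! hpos
        exact (recordMap_le_of_sum_nonneg hmq hpos.le).not_gt hlt
    have hsplit : ∑ l ∈ Finset.Ico m q, x l + ∑ l ∈ Finset.Ico q (recordMap x m), x l =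
        ∑ l ∈ Finset.Ico m (recordMap x m), x l := by
      rw [← Finset.sum_union (Finset.Ico_disjoint_Ico_consecutive _ _ _),
        Finset.Ico_union_Ico_eq_Ico hm hlt.le]
    have := hq _ hlt
    have := (recordMap_spec h).2
    omega
  · rwa [recordMap, if_neg h]

lemma iterate_recordMap_le_of_isRecordFixedPt (hq : IsRecordFixedPt x q) (hm : m ≤ q)
    (a : ℕ) : (recordMap x)^[a] m ≤ q :=
  MapsTo.iterate (f := recordMap x) (s := Iic q)
    (fun _ hm => recordMap_le_of_isRecordFixedPt hq hm) a hm

lemma le_iterate_recordMap (x : ℤ → ℤ) (m : ℤ) (a : ℕ) : m ≤ (recordMap x)^[a] m :=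
  Function.id_le_iterate_of_id_le (le_recordMap x) a m

lemma recordComponent_infinite (h : ∀ p, ¬ IsRecordFixedPt x p) (n : ℤ) :
    (recordComponent x n).Infinite := by
  have hmono : StrictMono fun b : ℕ => (recordMap x)^[b] n :=
    strictMono_nat_of_lt_succ fun b => by
      rw [Function.iterate_succ_apply']
      exact lt_recordMap (h _)
  exact infinite_of_injective_forall_mem hmono.injective fun b => ⟨0, b, rfl⟩

lemma recordComponent_subset_Icc (hq' : IsRecordFixedPt x q') (hq : IsRecordFixedPt x q)
    (hq'n : q' < n) (hnq : n ≤ q) : recordComponent x n ⊆ Icc q' q := by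
  rintro j ⟨a, b, hab⟩
  constructor
  · by_contra! hj
    have := iterate_recordMap_le_of_isRecordFixedPt hq' hj.le a
    have := le_iterate_recordMap x n b
    omega
  · have := iterate_recordMap_le_of_isRecordFixedPt hq hnq b
    have := le_iterate_recordMap x j a
    omega

lemma recordComponent_finite (hup : ∀ k, ∃ p ∈ Ici k, IsRecordFixedPt x p)
    (hdown : ∀ k, ∃ p ∈ Iic k, IsRecordFixedPt x p) (n : ℤ) :
    (recordComponent x n).Finite := by
  obtain ⟨q, hnq, hq⟩ := hup n
  obtain ⟨q', hq'n, hq'⟩ := hdown (n - 1)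
  exact (finite_Icc q' q).subset
    (recordComponent_subset_Icc hq' hq (Int.le_sub_one_iff.1 hq'n) hnq)

lemma isRecordFixedPt_shift_zero :
    IsRecordFixedPt (fun n => x (n + p)) 0 ↔ IsRecordFixedPt x p := by
  have hsum (j : ℤ) : ∑ l ∈ Finset.Ico 0 j, x (l + p) = ∑ l ∈ Finset.Ico p (j + p), x l := by
    rw [Finset.sum_Ico_add', zero_add]
  constructor
  · intro h j hj
    simpa [hsum] using h (j - p) (by omega)
  · intro h j hj
    simpa [hsum] using h (j + p) (by omega)

lemma measurableSet_isRecordFixedPt_zero : MeasurableSet {x : ℤ → ℤ | IsRecordFixedPt x 0} := by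
  simp only [IsRecordFixedPt, ofPred_forall]
  exact MeasurableSet.iInter fun j => MeasurableSet.iInter fun _ =>
    measurableSet_lt (Finset.measurable_sum _ fun l _ => measurable_pi_apply l) measurable_const

end RecordMap

section AeEq

variable {Ω ι : Type*} [MeasurableSpace Ω] {μ : Measure Ω}

lemma measure_eq_of_subset_of_subset_of_ae_eq {s t u : Set Ω} (hst : s ⊆ t) (htu : t ⊆ u)
    (hsu : s =ᵐ[μ] u) : μ t = μ u :=
  le_antisymm (measure_mono htu) ((measure_congr hsu).symm.le.trans (measure_mono hst))

variable [IsFiniteMeasure μ] {E : ι → Set Ω}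

lemma ae_eq_of_directed_of_measure_eq (hd : Directed (· ⊇ ·) E)
    (hm : ∀ i, NullMeasurableSet (E i) μ) (hμ : ∀ i j, μ (E i) = μ (E j)) (i j : ι) :
    E i =ᵐ[μ] E j := by
  obtain ⟨k, hki, hkj⟩ := hd i j
  have hk (l : ι) (hl : E k ⊆ E l) : E k =ᵐ[μ] E l :=
    ae_eq_of_subset_of_measure_ge hl (hμ l k).le (hm k) (measure_ne_top μ _)
  exact (hk i hki).symm.trans (hk j hkj)

lemma iInter_ae_eq_iUnion_of_directed [Countable ι] [Nonempty ι] (hd : Directed (· ⊇ ·) E)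
    (hm : ∀ i, NullMeasurableSet (E i) μ) (hμ : ∀ i j, μ (E i) = μ (E j)) :
    ⋂ i, E i =ᵐ[μ] ⋃ i, E i := by
  obtain ⟨i⟩ := ‹Nonempty ι›
  have hi (j : ι) : E j =ᵐ[μ] E i := ae_eq_of_directed_of_measure_eq hd hm hμ j i
  have hconst : ⋂ _ : ι, E i = ⋃ _ : ι, E i := by rw [iInter_const, iUnion_const]
  exact (Filter.EventuallyEq.countable_iInter hi).trans
    (hconst ▸ (Filter.EventuallyEq.countable_iUnion hi).symm)

end AeEq

section Stationary

variable {Ω α : Type*} {X : ℤ → Ω → α} {F : Set (ℤ → α)}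

def visitEvent (X : ℤ → Ω → α) (F : Set (ℤ → α)) (J : Set ℤ) : Set Ω :=
  {ω | ∃ p ∈ J, (fun n => X (n + p) ω) ∈ F}

lemma visitEvent_mono {J J' : Set ℤ} (h : J ⊆ J') : visitEvent X F J ⊆ visitEvent X F J' :=
  fun _ ⟨p, hp, hpF⟩ => ⟨p, h hp, hpF⟩

variable [MeasurableSpace Ω] [MeasurableSpace α] {μ : Measure Ω}

def IsStationaryProcess (X : ℤ → Ω → α) (μ : Measure Ω) : Prop :=
  ∀ k : ℤ, μ.map (fun ω n => X (n + k) ω) = μ.map (fun ω n => X n ω)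

lemma measurableSet_visitEvent (hmeas : ∀ n, Measurable (X n)) (hF : MeasurableSet F)
    (J : Set ℤ) : MeasurableSet (visitEvent X F J) := by
  have : visitEvent X F J = ⋃ p ∈ J, (fun ω n => X (n + p) ω) ⁻¹' F := by
    ext; simp [visitEvent]
  rw [this]
  exact .biUnion J.to_countable fun p _ => measurable_pi_lambda _ (fun n => hmeas (n + p)) hF

/-- Visit events of `X` are preimages under the path map of visit events of the coordinate
process on path space, so stationarity applies to them. -/
lemma measure_visitEvent_image_add_right (hmeas : ∀ n, Measurable (X n))
    (hstat : IsStationaryProcess X μ)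
    (hF : MeasurableSet F) (J : Set ℤ) (k : ℤ) :
    μ (visitEvent X F ((· + k) '' J)) = μ (visitEvent X F J) := by
  set S := visitEvent (fun n (y : ℤ → α) => y n) F J
  have hS : MeasurableSet S := measurableSet_visitEvent measurable_pi_apply hF J
  have hshift : visitEvent X F ((· + k) '' J) = (fun ω n => X (n + k) ω) ⁻¹' S := by
    ext
    simp only [visitEvent, S, mem_ofPred_eq, mem_preimage, exists_mem_image, add_assoc]
  have hbase : visitEvent X F J = (fun ω n => X n ω) ⁻¹' S := rfl
  rw [hshift, hbase, ← Measure.map_apply (measurable_pi_lambda _ fun n => hmeas (n + k)) hS,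
    ← Measure.map_apply (measurable_pi_lambda _ hmeas) hS, hstat]

lemma iInter_visitEvent_ae_eq [IsFiniteMeasure μ] (hmeas : ∀ n, Measurable (X n))
    (hstat : IsStationaryProcess X μ)
    (hF : MeasurableSet F) {J : Set ℤ} (hJ : J.Nonempty)
    (hd : Directed (· ⊇ ·) fun k : ℤ => (· + k) '' J) :
    ⋂ k : ℤ, visitEvent X F ((· + k) '' J) =ᵐ[μ] visitEvent X F univ := by
  have hunion : ⋃ k : ℤ, visitEvent X F ((· + k) '' J) = visitEvent X F univ := by
    refine (iUnion_subset fun k => visitEvent_mono (subset_univ _)).antisymm ?_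
    rintro ω ⟨p, -, hpF⟩
    obtain ⟨j, hj⟩ := hJ
    exact mem_iUnion.2 ⟨p - j, p, ⟨j, hj, by ring⟩, hpF⟩
  rw [← hunion]
  exact iInter_ae_eq_iUnion_of_directed (hd.mono_comp _ (g := visitEvent X F)
      fun _ _ h => visitEvent_mono h)
    (fun k => (measurableSet_visitEvent hmeas hF _).nullMeasurableSet)
    (fun k l => by rw [measure_visitEvent_image_add_right hmeas hstat hF,
      measure_visitEvent_image_add_right hmeas hstat hF])

lemma iInter_visitEvent_Ici_ae_eq [IsFiniteMeasure μ] (hmeas : ∀ n, Measurable (X n))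
    (hstat : IsStationaryProcess X μ)
    (hF : MeasurableSet F) :
    ⋂ k : ℤ, visitEvent X F (Ici k) =ᵐ[μ] visitEvent X F univ := by
  have himage (k : ℤ) : (· + k) '' Ici 0 = Ici k := by simp
  have h := iInter_visitEvent_ae_eq (μ := μ) (J := Ici 0) hmeas hstat hF nonempty_Ici
    (by simp only [himage]; exact antitone_Ici.directed_ge)
  simpa only [himage] using h

lemma iInter_visitEvent_Iic_ae_eq [IsFiniteMeasure μ] (hmeas : ∀ n, Measurable (X n))
    (hstat : IsStationaryProcess X μ)
    (hF : MeasurableSet F) :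
    ⋂ k : ℤ, visitEvent X F (Iic k) =ᵐ[μ] visitEvent X F univ := by
  have himage (k : ℤ) : (· + k) '' Iic 0 = Iic k := by simp
  have h := iInter_visitEvent_ae_eq (μ := μ) (J := Iic 0) hmeas hstat hF nonempty_Iic
    (by simp only [himage]; exact monotone_Iic.directed_ge)
  simpa only [himage] using h

end Stationary

theorem stationary_record_component_finite_prob_general
    {Ω : Type*} [MeasureSpace Ω] [IsProbabilityMeasure (ℙ : Measure Ω)]
    (X : ℤ → Ω → ℤ) (hmeas : ∀ n, Measurable (X n))
    (hstat : ∀ k : ℤ, Measure.map (fun ω => fun n : ℤ => X (n + k) ω) ℙ =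
      Measure.map (fun ω => fun n : ℤ => X n ω) ℙ)
    (C : ℤ → Ω → Set ℤ)
    (hC : ∀ i ω, C i ω = {j : ℤ | ∃ a b : ℕ,
      (recordMap (fun l => X l ω))^[a] j = (recordMap (fun l => X l ω))^[b] i}) :
    ℙ {ω | (C 0 ω).Finite} = ℙ {ω | ∀ n : ℤ, 1 ≤ n → (C n ω).Finite} ∧
      ℙ {ω | (C 0 ω).Finite} = ℙ {ω | ∀ n : ℤ, n ≤ -1 → (C n ω).Finite} := by
  set F := {y : ℤ → ℤ | IsRecordFixedPt y 0}
  have hF : MeasurableSet F := measurableSet_isRecordFixedPt_zero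
  have hvisit (J : Set ℤ) (ω : Ω) :
      ω ∈ visitEvent X F J ↔ ∃ p ∈ J, IsRecordFixedPt (fun l => X l ω) p := by
    simp only [visitEvent, F, mem_ofPred_eq, isRecordFixedPt_shift_zero (x := fun l => X l ω)]
  set twoSided := (⋂ k, visitEvent X F (Ici k)) ∩ ⋂ k, visitEvent X F (Iic k)
  have hae : twoSided =ᵐ[ℙ] visitEvent X F univ := by
    simpa only [inter_self] using (iInter_visitEvent_Ici_ae_eq hmeas hstat hF).inter
      (iInter_visitEvent_Iic_ae_eq hmeas hstat hF)
  have hfinite (ω : Ω) (hω : ω ∈ twoSided) (n : ℤ) : (C n ω).Finite := by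
    simp only [twoSided, mem_inter_iff, mem_iInter, hvisit] at hω
    exact hC n ω ▸ recordComponent_finite hω.1 hω.2 n
  have hinfinite (ω : Ω) (hω : ω ∉ visitEvent X F univ) (n : ℤ) : (C n ω).Infinite := by
    simp only [hvisit, mem_univ, true_and, not_exists] at hω
    exact hC n ω ▸ recordComponent_infinite hω n
  have hsqueeze (T : Set Ω) (hlow : twoSided ⊆ T) (hup : ∀ ω ∈ T, ∃ n, (C n ω).Finite) :
      ℙ T = ℙ (visitEvent X F univ) :=
    measure_eq_of_subset_of_subset_of_ae_eq hlow
      (fun ω hω => by_contra fun h => (hup ω hω).elim fun n hn => hinfinite ω h n hn) hae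
  have h0 : ℙ {ω | (C 0 ω).Finite} = ℙ (visitEvent X F univ) :=
    hsqueeze _ (fun ω hω => hfinite ω hω 0) fun ω hω => ⟨0, hω⟩
  have hpos : ℙ {ω | ∀ n : ℤ, 1 ≤ n → (C n ω).Finite} = ℙ (visitEvent X F univ) :=
    hsqueeze _ (fun ω hω n _ => hfinite ω hω n) fun ω hω => ⟨1, hω 1 le_rfl⟩
  have hneg : ℙ {ω | ∀ n : ℤ, n ≤ -1 → (C n ω).Finite} = ℙ (visitEvent X F univ) :=
    hsqueeze _ (fun ω hω n _ => hfinite ω hω n) fun ω hω => ⟨-1, hω (-1) le_rfl⟩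
  exact ⟨h0.trans hpos.symm, h0.trans hneg.symm⟩

/-- For a stationary integrable integer sequence, the probability that the record
component of `0` is finite equals the probability that all record components of positive
integers are finite, and also the probability that all record components of negative
integers are finite. -/
theorem stationary_record_component_finite_prob
    {Ω : Type*} [MeasureSpace Ω] [IsProbabilityMeasure (ℙ : Measure Ω)]
    (X : ℤ → Ω → ℤ) (hmeas : ∀ n, Measurable (X n))
    (hstat : ∀ k : ℤ, Measure.map (fun ω => fun n : ℤ => X (n + k) ω) ℙ =
      Measure.map (fun ω => fun n : ℤ => X n ω) ℙ)
    (hint : Integrable (fun ω => (X 0 ω : ℝ)) ℙ)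
    (C : ℤ → Ω → Set ℤ)
    (hC : ∀ i ω, C i ω = {j : ℤ | ∃ a b : ℕ,
      (recordMap (fun l => X l ω))^[a] j = (recordMap (fun l => X l ω))^[b] i}) :
    ℙ {ω | (C 0 ω).Finite} = ℙ {ω | ∀ n : ℤ, 1 ≤ n → (C n ω).Finite} ∧
      ℙ {ω | (C 0 ω).Finite} = ℙ {ω | ∀ n : ℤ, n ≤ -1 → (C n ω).Finite} :=
  stationary_record_component_finite_prob_general X hmeas hstat C hC
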